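/- arXiv:2202.12225 — 2 statements merged into one kernel-verified Lean document; each statement's English description precedes it below -/
import Mathlib

section
/- (Harish–Chandra projection of C_3.) Let q := −(1/4)·N²·p_1 + (N/2)·p_2 + (1/4)·p_1 + p_3 − (1/2)·p_1² ∈ ℚ[x_1,…,x_N], where p_k are the shifted power sums. Then C_3 − q(ι(E_{11}),…,ι(E_{NN})) lies in the subspace I = n_−U(gl_N) + U(gl_N)n_+ of U(gl_N); that is, the Harish–Chandra projection of C_3 equals q evaluated at ι(E_{11}),…,ι(E_{NN}). -/
set_option synthInstance.maxHeartbeats 1000000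
set_option maxHeartbeats 1000000


open scoped BigOperators

attribute [local instance 100] LieRing.ofAssociativeRing

/-- The Lie algebra `gl_N` of `N × N` complex matrices (with bracket `[x,y] = x*y - y*x`). -/
abbrev gl (N : ℕ) := Matrix (Fin N) (Fin N) ℂ

/-- The canonical embedding of `gl_N` into its universal enveloping algebra. -/
noncomputable def ιgl (N : ℕ) (x : gl N) : UniversalEnvelopingAlgebra ℂ (gl N) :=
  UniversalEnvelopingAlgebra.ι ℂ x

/-- The matrix unit `E_{ij}`. -/
def E {N : ℕ} (i j : Fin N) : gl N := Matrix.single i j (1 : ℂ)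

/-- The value of the `gl_N` invariant on a permutation `σ` of `{1, …, m}`. -/
noncomputable def wgl (N m : ℕ) (σ : Equiv.Perm (Fin m)) :
    UniversalEnvelopingAlgebra ℂ (gl N) :=
  ∑ i : Fin m → Fin N, (List.ofFn fun t : Fin m => ιgl N (E (i t) (i (σ t)))).prod

/-- The `k`-th Casimir element `C_k = Σ E_{i_1 i_2} E_{i_2 i_3} ⋯ E_{i_k i_1}`. -/
noncomputable def casimir (N k : ℕ) : UniversalEnvelopingAlgebra ℂ (gl N) :=
  wgl N k (finRotate k)

/-- The subspace `I = n_− U(gl_N) + U(gl_N) n_+`: the `ℂ`-linear span of all products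
`ι(x)·u` with `x` strictly lower triangular together with all products `u·ι(y)` with `y`
strictly upper triangular (`u ∈ U(gl_N)`). -/
noncomputable def triangIdeal (N : ℕ) : Submodule ℂ (UniversalEnvelopingAlgebra ℂ (gl N)) :=
  Submodule.span ℂ
    ({z | ∃ (x : gl N) (u : UniversalEnvelopingAlgebra ℂ (gl N)),
        (∀ a b : Fin N, a ≤ b → x a b = 0) ∧ z = ιgl N x * u} ∪
     {z | ∃ (y : gl N) (u : UniversalEnvelopingAlgebra ℂ (gl N)),
        (∀ a b : Fin N, b ≤ a → y a b = 0) ∧ z = u * ιgl N y})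

/-- The `k`-th shifted power sum
`p_k = Σ_{i=1}^{N} ((x_i + (N+1)/2 − i)^k − ((N+1)/2 − i)^k) ∈ ℚ[x_1,…,x_N]`
(the index `i : Fin N` corresponds to the variable `x_{i+1}`). -/
noncomputable def shiftedPow (N k : ℕ) : MvPolynomial (Fin N) ℚ :=
  ∑ i : Fin N,
    ((MvPolynomial.X i + MvPolynomial.C (((N : ℚ) + 1) / 2 - (((i : ℕ) : ℚ) + 1))) ^ k -
      MvPolynomial.C (((N : ℚ) + 1) / 2 - (((i : ℕ) : ℚ) + 1)) ^ k)

/-- The evaluation of a polynomial `q ∈ ℚ[x_1,…,x_N]` at the pairwise commuting elements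
`ι(E_{11}), …, ι(E_{NN})` of `U(gl_N)`. -/
noncomputable def evalDiag (N : ℕ) (q : MvPolynomial (Fin N) ℚ) :
    UniversalEnvelopingAlgebra ℂ (gl N) :=
  ∑ d ∈ q.support,
    algebraMap ℚ ℂ (q.coeff d) • (List.ofFn fun i : Fin N => ιgl N (E i i) ^ d i).prod

noncomputable def qPoly (N : ℕ) : MvPolynomial (Fin N) ℚ :=
  MvPolynomial.C (-(1 / 4 : ℚ) * (N : ℚ) ^ 2) * shiftedPow N 1 +
    MvPolynomial.C ((N : ℚ) / 2) * shiftedPow N 2 +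
    MvPolynomial.C (1 / 4 : ℚ) * shiftedPow N 1 + shiftedPow N 3 -
    MvPolynomial.C (1 / 2 : ℚ) * (shiftedPow N 1) ^ 2

section Aux
open Finset

noncomputable def ee (N : ℕ) (i j : Fin N) : UniversalEnvelopingAlgebra ℂ (gl N) := ιgl N (E i j)

variable {N : ℕ}

lemma ιgl_bracket (x y : gl N) :
    ιgl N x * ιgl N y - ιgl N y * ιgl N x = ιgl N ⁅x, y⁆ := by
  rw [ιgl, ιgl, ιgl, LieHom.map_lie]; rfl

lemma ιgl_sub (x y : gl N) : ιgl N (x - y) = ιgl N x - ιgl N y := by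
  simp [ιgl, map_sub]

lemma ιgl_zero : ιgl N 0 = 0 := by simp [ιgl]

lemma E_mul (i j k l : Fin N) : (E i j : gl N) * E k l = if j = k then E i l else 0 := by
  split
  · subst ‹j = k›
    have := Matrix.single_mul_single_same (i := i) (j := j) (c := (1:ℂ)) l 1
    simpa [E] using this
  · exact Matrix.single_mul_single_of_ne (c := (1:ℂ)) i j k ‹j ≠ k› 1

lemma e_comm (i j k l : Fin N) :
    ee N i j * ee N k l = ee N k l * ee N i j
      + ((if j = k then ee N i l else 0) - (if l = i then ee N k j else 0)) := by
  have h := ιgl_bracket (E i j) (E k l)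
  have hb : ⁅(E i j : gl N), E k l⁆
      = (if j = k then E i l else 0) - (if l = i then E k j else 0) := by
    rw [Ring.lie_def, E_mul, E_mul]
  rw [hb, ιgl_sub] at h
  have h1 : ιgl N (if j = k then E i l else 0) = (if j = k then ιgl N (E i l) else 0) := by
    split <;> simp [ιgl_zero]
  have h2 : ιgl N (if l = i then E k j else 0) = (if l = i then ιgl N (E k j) else 0) := by
    split <;> simp [ιgl_zero]
  rw [h1, h2] at h
  simp only [ee]
  linear_combination (norm := noncomm_ring) h

lemma lower_mem {i j : Fin N} (h : j < i) (u : UniversalEnvelopingAlgebra ℂ (gl N)) :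
    ee N i j * u ∈ triangIdeal N := by
  apply Submodule.subset_span
  left
  refine ⟨E i j, u, fun a b hab => ?_, rfl⟩
  simp only [E, Matrix.single, Matrix.of_apply]
  rw [if_neg]
  rintro ⟨rfl, rfl⟩
  exact absurd hab (not_le.mpr h)

lemma upper_mem {i j : Fin N} (h : i < j) (u : UniversalEnvelopingAlgebra ℂ (gl N)) :
    u * ee N i j ∈ triangIdeal N := by
  apply Submodule.subset_span
  right
  refine ⟨E i j, u, fun a b hab => ?_, rfl⟩
  simp only [E, Matrix.single, Matrix.of_apply]
  rw [if_neg]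
  rintro ⟨rfl, rfl⟩
  exact absurd hab (not_le.mpr h)

noncomputable def DD (N : ℕ) (i j k : Fin N) : UniversalEnvelopingAlgebra ℂ (gl N) :=
  (if i = j ∧ j = k then ee N i i ^ 3 else 0)
  + (if i < j ∧ j = k then (ee N i i - ee N j j) * (ee N j j + 1) else 0)
  + (if i < j ∧ i = k then (ee N i i - ee N j j) * ee N i i else 0)
  + (if i = j ∧ i < k then ee N i i * (ee N i i - ee N k k) else 0)
  + (if i < j ∧ j < k then ee N i i - ee N j j else 0)
  + (if i < k ∧ k < j then ee N i i - ee N k k else 0)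

lemma word_mem (i j k : Fin N) :
    ee N i j * (ee N j k * ee N k i) - DD N i j k ∈ triangIdeal N := by
  rcases lt_trichotomy j i with hji | rfl | hij
  · -- j < i : word ∈ I, DD = 0
    have hD : DD N i j k = 0 := by
      have c6 : ¬(i < k ∧ k < j) := by rintro ⟨h1, h2⟩; exact absurd (h1.trans h2) hji.asymm
      simp [DD, hji.ne', hji.asymm, hji.ne, c6]
    rw [hD, sub_zero]
    exact lower_mem hji _
  · -- i = j (i has been substituted by j)
    rcases lt_trichotomy k j with hkj | rfl | hjk
    · have hD : DD N j j k = 0 := by simp [DD, hkj.ne', hkj.asymm]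
      rw [hD, sub_zero, ← mul_assoc]
      exact upper_mem hkj _
    · -- all equal
      have hD : DD N k k k = ee N k k ^ 3 := by simp [DD]
      rw [hD]
      have : ee N k k * (ee N k k * ee N k k) - ee N k k ^ 3 = 0 := by noncomm_ring
      rw [this]; exact zero_mem _
    · -- i = j < k
      have hD : DD N j j k = ee N j j * (ee N j j - ee N k k) := by
        simp [DD, hjk, hjk.ne, hjk.asymm]
      have h1 := e_comm (N := N) j k k j
      rw [if_pos rfl, if_pos rfl] at h1
      have key : ee N j j * (ee N j k * ee N k j) - DD N j j k
          = (ee N j j * ee N k j) * ee N j k := by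
        rw [hD]; linear_combination (norm := noncomm_ring) (ee N j j) * h1
      rw [key]
      exact upper_mem hjk _
  · -- i < j
    rcases lt_trichotomy k i with hki | rfl | hik
    · have hD : DD N i j k = 0 := by
        simp [DD, hij.ne, hij, hki.ne', hki.asymm, (hki.trans hij).ne', (hki.trans hij).asymm]
      rw [hD, sub_zero, ← mul_assoc]
      exact upper_mem hki _
    · -- i = k < j (i substituted by k)
      have hD : DD N k j k = (ee N k k - ee N j j) * ee N k k := by
        simp [DD, hij, hij.ne, hij.ne', hij.asymm]
      have h2 := e_comm (N := N) k j j k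
      rw [if_pos rfl, if_pos rfl] at h2
      have key : ee N k j * (ee N j k * ee N k k) - DD N k j k
          = ee N j k * (ee N k j * ee N k k) := by
        rw [hD]; linear_combination (norm := noncomm_ring) h2 * (ee N k k)
      rw [key]
      exact lower_mem hij _
    · -- i < j, i < k
      rcases lt_trichotomy j k with hjk | rfl | hkj
      · -- i < j < k
        have hD : DD N i j k = ee N i i - ee N j j := by
          simp [DD, hij, hjk, hij.ne, hjk.ne, hij.ne', (hij.trans hjk).ne', hik.ne,
            hij.asymm, hjk.asymm, hik.asymm]
        have h1 := e_comm (N := N) j k k i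
        rw [if_pos rfl, if_neg hij.ne] at h1
        have h2 := e_comm (N := N) i j j i
        rw [if_pos rfl, if_pos rfl] at h2
        have key : ee N i j * (ee N j k * ee N k i) - DD N i j k
            = (ee N i j * ee N k i) * ee N j k + ee N j i * ee N i j := by
          rw [hD]; linear_combination (norm := noncomm_ring) (ee N i j) * h1 + h2
        rw [key]
        exact add_mem (upper_mem hjk _) (lower_mem hij _)
      · -- i < j = k (k substituted by j)
        have hD : DD N i j j = (ee N i i - ee N j j) * (ee N j j + 1) := by
          simp [DD, hij, hij.ne, hij.ne', hij.asymm]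
        have h1 := e_comm (N := N) j j j i
        rw [if_pos rfl, if_neg hij.ne] at h1
        have h2 := e_comm (N := N) i j j i
        rw [if_pos rfl, if_pos rfl] at h2
        have key : ee N i j * (ee N j j * ee N j i) - DD N i j j
            = ee N j i * (ee N i j * ee N j j) + ee N j i * ee N i j := by
          rw [hD]
          linear_combination (norm := noncomm_ring) (ee N i j) * h1 + h2 * (ee N j j) + h2
        rw [key]
        exact add_mem (lower_mem hij _) (lower_mem hij _)
      · -- i < k < j
        have hD : DD N i j k = ee N i i - ee N k k := by
          simp [DD, hij, hik, hkj, hij.ne, hij.ne', hik.ne, hkj.ne, hkj.ne', hij.asymm,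
            hik.asymm, hkj.asymm]
        have h1 := e_comm (N := N) j k k i
        rw [if_pos rfl, if_neg hij.ne] at h1
        have h2 := e_comm (N := N) i j k i
        rw [if_neg hkj.ne', if_pos rfl] at h2
        have h3 := e_comm (N := N) k j j k
        rw [if_pos rfl, if_pos rfl] at h3
        have h4 := e_comm (N := N) i j j i
        rw [if_pos rfl, if_pos rfl] at h4
        have key : ee N i j * (ee N j k * ee N k i) - DD N i j k
            = ee N k i * (ee N i j * ee N j k) - ee N j k * ee N k j
              + ee N j i * ee N i j := by
          rw [hD]
          linear_combination (norm := noncomm_ring)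
            (ee N i j) * h1 + h2 * (ee N j k) - h3 + h4
        rw [key]
        exact add_mem (sub_mem (lower_mem hik _) (lower_mem hkj _)) (lower_mem hij _)


lemma oddsum : ∀ M : ℕ, ∑ t ∈ range M, (1 + 2*(M-1-t)) = M^2 := by
  intro M
  induction M with
  | zero => simp
  | succ M ih =>
    rw [Finset.sum_range_succ]
    have h : ∀ t ∈ range M, 1 + 2*(M+1-1-t) = (1+2*(M-1-t)) + 2 := by
      intro t ht; rw [Finset.mem_range] at ht; omega
    rw [Finset.sum_congr rfl h, Finset.sum_add_distrib, ih, Finset.sum_const, Finset.card_range]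
    simp; ring

lemma sum_lt (i : Fin N) (g : Fin N → ℚ) :
    (∑ j, if i < j then g j else 0) = ∑ j ∈ Finset.Ioi i, g j := by
  rw [← Finset.filter_lt_eq_Ioi, Finset.sum_filter]

lemma sum_gt (i : Fin N) (g : Fin N → ℚ) :
    (∑ j, if j < i then g j else 0) = ∑ j ∈ Finset.Iio i, g j := by
  rw [← Finset.filter_gt_eq_Iio, Finset.sum_filter]

lemma swapsum (F : Fin N → Fin N → ℚ) :
    ∑ i, ∑ j ∈ Finset.Ioi i, F i j = ∑ j, ∑ i ∈ Finset.Iio j, F i j :=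
  Finset.sum_comm' (by intro a b; simp)

lemma sum_Ioi_val (i : Fin N) (g : ℕ → ℚ) :
    ∑ j ∈ Finset.Ioi i, g (j:ℕ) = ∑ m ∈ Finset.Ico ((i:ℕ)+1) N, g m := by
  calc ∑ j ∈ Finset.Ioi i, g (j:ℕ)
      = ∑ j : Fin N, (if (i:ℕ) < (j:ℕ) then g (j:ℕ) else 0) := by
        rw [← Finset.filter_lt_eq_Ioi, Finset.sum_filter]
        rfl
    _ = ∑ m ∈ range N, (if (i:ℕ) < m then g m else 0) :=
        Fin.sum_univ_eq_sum_range (fun m => if (i:ℕ) < m then g m else 0) N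
    _ = ∑ m ∈ (range N).filter (fun m => (i:ℕ) < m), g m := (Finset.sum_filter _ _).symm
    _ = ∑ m ∈ Finset.Ico ((i:ℕ)+1) N, g m := by
        congr 1
        ext m
        simp only [Finset.mem_filter, Finset.mem_range, Finset.mem_Ico]
        omega

lemma oddsum_fin (i : Fin N) :
    ∑ j ∈ Finset.Ioi i, ((1:ℚ) + 2*((N - 1 - (j:ℕ) : ℕ) : ℚ))
      = (((N - 1 - (i:ℕ) : ℕ) : ℚ))^2 := by
  have h0 : ∑ j ∈ Finset.Ioi i, ((1:ℚ) + 2*((N - 1 - (j:ℕ) : ℕ) : ℚ))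
      = ∑ j ∈ Finset.Ioi i, (((1 + 2*(N - 1 - (j:ℕ)) : ℕ) : ℚ)) := by
    refine Finset.sum_congr rfl fun j _ => ?_; push_cast; ring
  rw [h0, sum_Ioi_val i (fun m => ((1 + 2*(N-1-m) : ℕ) : ℚ)), ← Nat.cast_sum]
  have h2 : ∑ m ∈ Finset.Ico ((i:ℕ)+1) N, (1 + 2*(N-1-m)) = (N - 1 - (i:ℕ))^2 := by
    rw [Finset.sum_Ico_eq_sum_range]
    have h3 : ∀ t ∈ range (N - ((i:ℕ)+1)), 1 + 2*(N-1-((i:ℕ)+1+t))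
        = 1 + 2*((N - 1 - (i:ℕ)) - 1 - t) := by intro t _; omega
    rw [Finset.sum_congr rfl h3]
    have h4 : N - ((i:ℕ)+1) = N - 1 - (i:ℕ) := by omega
    rw [h4, oddsum]
  rw [h2]
  push_cast
  ring

lemma keyQ (hN : 1 ≤ N) (x : Fin N → ℚ) :
    (∑ i, ∑ j, ∑ k,
      ((if i = j ∧ j = k then x i ^ 3 else 0)
        + (if i < j ∧ j = k then (x i - x j) * (x j + 1) else 0)
        + (if i < j ∧ i = k then (x i - x j) * x i else 0)
        + (if i = j ∧ i < k then x i * (x i - x k) else 0)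
        + (if i < j ∧ j < k then x i - x j else 0)
        + (if i < k ∧ k < j then x i - x k else 0)))
    = (-(1/4) * (N:ℚ)^2) * (∑ i, ((x i + (((N:ℚ)+1)/2 - ((i:ℕ)+1)))^1 - (((N:ℚ)+1)/2 - ((i:ℕ)+1))^1))
      + ((N:ℚ)/2) * (∑ i, ((x i + (((N:ℚ)+1)/2 - ((i:ℕ)+1)))^2 - (((N:ℚ)+1)/2 - ((i:ℕ)+1))^2))
      + (1/4) * (∑ i, ((x i + (((N:ℚ)+1)/2 - ((i:ℕ)+1)))^1 - (((N:ℚ)+1)/2 - ((i:ℕ)+1))^1))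
      + (∑ i, ((x i + (((N:ℚ)+1)/2 - ((i:ℕ)+1)))^3 - (((N:ℚ)+1)/2 - ((i:ℕ)+1))^3))
      - (1/2) * (∑ i, ((x i + (((N:ℚ)+1)/2 - ((i:ℕ)+1)))^1 - (((N:ℚ)+1)/2 - ((i:ℕ)+1))^1))^2 := by
  -- abbreviations
  set W : ℚ := ∑ i, ∑ j ∈ Finset.Ioi i, x i * x j with hW
  -- Step 1 : collapse the inner double sum
  have step1 : ∀ i : Fin N,
      (∑ j, ∑ k,
        ((if i = j ∧ j = k then x i ^ 3 else 0)
          + (if i < j ∧ j = k then (x i - x j) * (x j + 1) else 0)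
          + (if i < j ∧ i = k then (x i - x j) * x i else 0)
          + (if i = j ∧ i < k then x i * (x i - x k) else 0)
          + (if i < j ∧ j < k then x i - x j else 0)
          + (if i < k ∧ k < j then x i - x k else 0)))
      = x i ^ 3 + ∑ j ∈ Finset.Ioi i,
          (2*(x i)^2 - (x j)^2 - x i * x j
            + (1 + 2*((N - 1 - (j:ℕ) : ℕ) : ℚ))*(x i - x j)) := by
    intro i
    have t1 : ∀ j : Fin N, (∑ k, if i = j ∧ j = k then x i ^ 3 else 0)
        = if i = j then x i ^ 3 else 0 := fun j => by by_cases h : i = j <;> simp [h]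
    have t2 : ∀ j : Fin N, (∑ k : Fin N, if i < j ∧ j = k then (x i - x j) * (x j + 1) else 0)
        = if i < j then (x i - x j) * (x j + 1) else 0 := fun j => by
      by_cases h : i < j <;> simp [h]
    have t3 : ∀ j : Fin N, (∑ k, if i < j ∧ i = k then (x i - x j) * x i else 0)
        = if i < j then (x i - x j) * x i else 0 := fun j => by
      by_cases h : i < j <;> simp [h]
    have t4 : ∀ j : Fin N, (∑ k, if i = j ∧ i < k then x i * (x i - x k) else 0)
        = if i = j then (∑ k ∈ Finset.Ioi i, x i * (x i - x k)) else 0 := fun j => by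
      by_cases h : i = j
      · subst h; simpa using (sum_lt i (fun k => x i * (x i - x k))).symm ▸ rfl
      · simp [h]
    have t5 : ∀ j : Fin N, (∑ k : Fin N, if i < j ∧ j < k then x i - x j else 0)
        = if i < j then ((N - 1 - (j:ℕ) : ℕ) : ℚ)*(x i - x j) else 0 := fun j => by
      by_cases h : i < j
      · simp only [h, true_and, if_true]
        rw [sum_lt j (fun k => x i - x j), Finset.sum_const, Fin.card_Ioi, nsmul_eq_mul]
      · simp [h]
    have t6 : (∑ j, ∑ k, if i < k ∧ k < j then x i - x k else 0)
        = ∑ k ∈ Finset.Ioi i, ((N - 1 - (k:ℕ) : ℕ) : ℚ)*(x i - x k) := by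
      rw [Finset.sum_comm, ← sum_lt i (fun k => ((N - 1 - (k:ℕ) : ℕ) : ℚ)*(x i - x k))]
      refine Finset.sum_congr rfl fun k _ => ?_
      by_cases h : i < k
      · simp only [h, true_and, if_true]
        rw [sum_lt k (fun j => x i - x k), Finset.sum_const, Fin.card_Ioi, nsmul_eq_mul]
      · simp [h]
    simp only [Finset.sum_add_distrib]
    rw [Finset.sum_congr rfl (fun j _ => t1 j), Finset.sum_congr rfl (fun j _ => t2 j),
      Finset.sum_congr rfl (fun j _ => t3 j), Finset.sum_congr rfl (fun j _ => t4 j),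
      Finset.sum_congr rfl (fun j _ => t5 j), t6]
    rw [Finset.sum_ite_eq, Finset.sum_ite_eq, if_pos (Finset.mem_univ i),
      if_pos (Finset.mem_univ i)]
    rw [sum_lt i, sum_lt i, sum_lt i]
    rw [add_assoc, add_assoc, add_assoc, add_assoc]
    congr 1
    simp only [← Finset.sum_add_distrib]
    exact Finset.sum_congr rfl fun j _ => by ring
  -- pieces
  have hsq : (∑ i, x i)^2 = (∑ i, x i^2) + 2*W := by
    have h1 : (∑ i, x i)^2 = ∑ i, ∑ j, x i * x j := by
      rw [sq, Finset.sum_mul_sum]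
    have h2 : ∀ i j : Fin N, x i * x j
        = (if i < j then x i*x j else 0)
          + ((if i = j then x i*x j else 0) + (if j < i then x i*x j else 0)) := by
      intro i j
      rcases lt_trichotomy i j with h|h|h
      · simp [h, h.ne, h.asymm]
      · simp [h, lt_self_iff_false]
      · simp [h, h.ne', h.asymm]
    rw [h1, Finset.sum_congr rfl fun i _ => Finset.sum_congr rfl fun j _ => h2 i j]
    simp only [Finset.sum_add_distrib]
    have p1 : ∑ i : Fin N, ∑ j, (if i < j then x i*x j else 0) = W := by
      rw [hW]; exact Finset.sum_congr rfl fun i _ => sum_lt i _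
    have p2 : ∑ i : Fin N, ∑ j, (if i = j then x i*x j else 0) = ∑ i, x i^2 := by
      refine Finset.sum_congr rfl fun i _ => ?_
      rw [Finset.sum_ite_eq, if_pos (Finset.mem_univ i), sq]
    have p3 : ∑ i : Fin N, ∑ j, (if j < i then x i*x j else 0) = W := by
      have e1 : ∑ i : Fin N, ∑ j, (if j < i then x i*x j else 0)
          = ∑ i : Fin N, ∑ j ∈ Finset.Iio i, x i * x j :=
        Finset.sum_congr rfl fun i _ => sum_gt i _
      rw [e1, ← swapsum (fun a b => x b * x a), hW]
      exact Finset.sum_congr rfl fun a _ => Finset.sum_congr rfl fun b _ => mul_comm _ _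
    rw [p1, p2, p3]; ring
  -- decompose the double sum
  have hA : (∑ i : Fin N, ∑ j ∈ Finset.Ioi i,
        (2*(x i)^2 - (x j)^2 - x i * x j
          + (1 + 2*((N - 1 - (j:ℕ) : ℕ) : ℚ))*(x i - x j)))
      = (∑ i : Fin N, ((N - 1 - (i:ℕ) : ℕ) : ℚ)*(2*(x i)^2))
        - (∑ i : Fin N, ((i:ℕ) : ℚ)*(x i)^2) - W
        + ((∑ i : Fin N, (((N - 1 - (i:ℕ) : ℕ) : ℚ))^2*(x i))
          - (∑ i : Fin N, ((i:ℕ) : ℚ)*((1 + 2*((N - 1 - (i:ℕ) : ℕ) : ℚ))*(x i)))) := by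
    have e1 : ∀ i : Fin N, (∑ j ∈ Finset.Ioi i,
          (2*(x i)^2 - (x j)^2 - x i * x j
            + (1 + 2*((N - 1 - (j:ℕ) : ℕ) : ℚ))*(x i - x j)))
        = (((∑ j ∈ Finset.Ioi i, 2*(x i)^2) - ∑ j ∈ Finset.Ioi i, (x j)^2)
            - ∑ j ∈ Finset.Ioi i, x i * x j)
          + ((∑ j ∈ Finset.Ioi i, (1 + 2*((N - 1 - (j:ℕ) : ℕ) : ℚ))*(x i))
            - ∑ j ∈ Finset.Ioi i, (1 + 2*((N - 1 - (j:ℕ) : ℕ) : ℚ))*(x j)) := by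
      intro i
      rw [← Finset.sum_sub_distrib, ← Finset.sum_sub_distrib, ← Finset.sum_sub_distrib,
        ← Finset.sum_add_distrib]
      exact Finset.sum_congr rfl fun j _ => by ring
    rw [Finset.sum_congr rfl fun i _ => e1 i]
    simp only [Finset.sum_add_distrib, Finset.sum_sub_distrib]
    have q1 : ∑ i : Fin N, ∑ j ∈ Finset.Ioi i, 2*(x i)^2
        = ∑ i : Fin N, ((N - 1 - (i:ℕ) : ℕ) : ℚ)*(2*(x i)^2) := by
      refine Finset.sum_congr rfl fun i _ => ?_
      rw [Finset.sum_const, Fin.card_Ioi, nsmul_eq_mul]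
    have q2 : ∑ i : Fin N, ∑ j ∈ Finset.Ioi i, (x j)^2
        = ∑ i : Fin N, ((i:ℕ) : ℚ)*(x i)^2 := by
      rw [swapsum (fun a b => (x b)^2)]
      refine Finset.sum_congr rfl fun j _ => ?_
      rw [Finset.sum_const, Fin.card_Iio, nsmul_eq_mul]
    have q4 : ∑ i : Fin N, ∑ j ∈ Finset.Ioi i, (1 + 2*((N - 1 - (j:ℕ) : ℕ) : ℚ))*(x i)
        = ∑ i : Fin N, (((N - 1 - (i:ℕ) : ℕ) : ℚ))^2*(x i) := by
      refine Finset.sum_congr rfl fun i _ => ?_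
      rw [← Finset.sum_mul, oddsum_fin]
    have q5 : ∑ i : Fin N, ∑ j ∈ Finset.Ioi i, (1 + 2*((N - 1 - (j:ℕ) : ℕ) : ℚ))*(x j)
        = ∑ i : Fin N, ((i:ℕ) : ℚ)*((1 + 2*((N - 1 - (i:ℕ) : ℕ) : ℚ))*(x i)) := by
      rw [swapsum (fun a b => (1 + 2*((N - 1 - (b:ℕ) : ℕ) : ℚ))*(x b))]
      refine Finset.sum_congr rfl fun j _ => ?_
      rw [Finset.sum_const, Fin.card_Iio, nsmul_eq_mul]
    rw [q1, q2, q4, q5, hW]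
  -- power sum rewrites
  have hP1 : (∑ i : Fin N, ((x i + (((N:ℚ)+1)/2 - ((i:ℕ)+1)))^1 - (((N:ℚ)+1)/2 - ((i:ℕ)+1))^1))
      = ∑ i : Fin N, x i := Finset.sum_congr rfl fun i _ => by ring
  have hP2 : (∑ i : Fin N, ((x i + (((N:ℚ)+1)/2 - ((i:ℕ)+1)))^2 - (((N:ℚ)+1)/2 - ((i:ℕ)+1))^2))
      = ∑ i : Fin N, ((x i)^2 + 2*((((N:ℚ)+1)/2 - ((i:ℕ)+1)))*(x i)) :=
    Finset.sum_congr rfl fun i _ => by ring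
  have hP3 : (∑ i : Fin N, ((x i + (((N:ℚ)+1)/2 - ((i:ℕ)+1)))^3 - (((N:ℚ)+1)/2 - ((i:ℕ)+1))^3))
      = ∑ i : Fin N, ((x i)^3 + 3*((((N:ℚ)+1)/2 - ((i:ℕ)+1)))*(x i)^2
          + 3*((((N:ℚ)+1)/2 - ((i:ℕ)+1)))^2*(x i)) :=
    Finset.sum_congr rfl fun i _ => by ring
  -- the per-index comparison
  have hfinal : (∑ i : Fin N,
        ((x i)^3 + (((N - 1 - (i:ℕ) : ℕ) : ℚ)*(2*(x i)^2) - ((i:ℕ) : ℚ)*(x i)^2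
          + ((((N - 1 - (i:ℕ) : ℕ) : ℚ))^2*(x i)
            - ((i:ℕ) : ℚ)*((1 + 2*((N - 1 - (i:ℕ) : ℕ) : ℚ))*(x i))))))
      = ∑ i : Fin N,
        ((-(1/4) * (N:ℚ)^2) * (x i)
          + ((N:ℚ)/2) * ((x i)^2 + 2*((((N:ℚ)+1)/2 - ((i:ℕ)+1)))*(x i))
          + (1/4) * (x i)
          + ((x i)^3 + 3*((((N:ℚ)+1)/2 - ((i:ℕ)+1)))*(x i)^2
              + 3*((((N:ℚ)+1)/2 - ((i:ℕ)+1)))^2*(x i))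
          - (1/2) * (x i)^2) := by
    refine Finset.sum_congr rfl fun i _ => ?_
    have hiN : (i:ℕ) < N := i.isLt
    have hc : ((N - 1 - (i:ℕ) : ℕ) : ℚ) = (N:ℚ) - 1 - ((i:ℕ) : ℚ) := by
      rw [Nat.cast_sub (by omega), Nat.cast_sub (by omega), Nat.cast_one]
    rw [hc]
    ring
  -- merge left side
  have hL : (∑ i : Fin N, (x i)^3)
        + ((∑ i : Fin N, ((N - 1 - (i:ℕ) : ℕ) : ℚ)*(2*(x i)^2))
          - (∑ i : Fin N, ((i:ℕ) : ℚ)*(x i)^2)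
          + ((∑ i : Fin N, (((N - 1 - (i:ℕ) : ℕ) : ℚ))^2*(x i))
            - (∑ i : Fin N, ((i:ℕ) : ℚ)*((1 + 2*((N - 1 - (i:ℕ) : ℕ) : ℚ))*(x i)))))
      = (∑ i : Fin N,
        ((x i)^3 + (((N - 1 - (i:ℕ) : ℕ) : ℚ)*(2*(x i)^2) - ((i:ℕ) : ℚ)*(x i)^2
          + ((((N - 1 - (i:ℕ) : ℕ) : ℚ))^2*(x i)
            - ((i:ℕ) : ℚ)*((1 + 2*((N - 1 - (i:ℕ) : ℕ) : ℚ))*(x i)))))) := by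
    rw [← Finset.sum_sub_distrib, ← Finset.sum_sub_distrib, ← Finset.sum_add_distrib,
      ← Finset.sum_add_distrib]
  -- merge right side
  have hR : (-(1/4) * (N:ℚ)^2) * (∑ i : Fin N, x i)
        + ((N:ℚ)/2) * (∑ i : Fin N, ((x i)^2 + 2*((((N:ℚ)+1)/2 - ((i:ℕ)+1)))*(x i)))
        + (1/4) * (∑ i : Fin N, x i)
        + (∑ i : Fin N, ((x i)^3 + 3*((((N:ℚ)+1)/2 - ((i:ℕ)+1)))*(x i)^2
            + 3*((((N:ℚ)+1)/2 - ((i:ℕ)+1)))^2*(x i)))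
        - (1/2) * (∑ i : Fin N, (x i)^2)
      = ∑ i : Fin N,
        ((-(1/4) * (N:ℚ)^2) * (x i)
          + ((N:ℚ)/2) * ((x i)^2 + 2*((((N:ℚ)+1)/2 - ((i:ℕ)+1)))*(x i))
          + (1/4) * (x i)
          + ((x i)^3 + 3*((((N:ℚ)+1)/2 - ((i:ℕ)+1)))*(x i)^2
              + 3*((((N:ℚ)+1)/2 - ((i:ℕ)+1)))^2*(x i))
          - (1/2) * (x i)^2) := by
    rw [Finset.mul_sum, Finset.mul_sum, Finset.mul_sum, Finset.mul_sum,
      ← Finset.sum_add_distrib, ← Finset.sum_add_distrib, ← Finset.sum_add_distrib,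
      ← Finset.sum_sub_distrib]
  rw [Finset.sum_congr rfl fun i _ => step1 i, Finset.sum_add_distrib, hA,
    hP1, hP2, hP3, hsq]
  linear_combination hL + hfinal - hR


end Aux

-- the commuting diagonal family
lemma hd_comm {N : ℕ} (i j : Fin N) : ee N i i * ee N j j = ee N j j * ee N i i := by
  have h := e_comm (N := N) i i j j
  by_cases hij : i = j
  · subst hij; rfl
  · rw [if_neg hij, if_neg (Ne.symm hij)] at h
    linear_combination (norm := noncomm_ring) h

noncomputable def AdjD (N : ℕ) : Subalgebra ℂ (UniversalEnvelopingAlgebra ℂ (gl N)) :=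
  Algebra.adjoin ℂ (Set.range (fun i : Fin N => ee N i i))

noncomputable instance (N : ℕ) : CommRing (AdjD N) :=
  Algebra.adjoinCommRingOfComm ℂ (by rintro a ⟨i, rfl⟩ b ⟨j, rfl⟩; exact hd_comm i j)

noncomputable instance (N : ℕ) :
    @Algebra ℂ (AdjD N) _ (inferInstance : CommRing (AdjD N)).toSemiring :=
  Subalgebra.algebra (AdjD N)

noncomputable def HAd (N : ℕ) : Fin N → AdjD N :=
  fun i => ⟨ee N i i, Algebra.subset_adjoin (Set.mem_range_self i)⟩

noncomputable def Psi (N : ℕ) :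
    MvPolynomial (Fin N) ℚ →+* UniversalEnvelopingAlgebra ℂ (gl N) :=
  (((AdjD N).val.toRingHom).comp (MvPolynomial.aeval (R := ℂ) (HAd N)).toRingHom).comp
    (MvPolynomial.map (algebraMap ℚ ℂ))

lemma Psi_X {N : ℕ} (i : Fin N) : Psi N (MvPolynomial.X i) = ee N i i := by
  show (AdjD N).val
      ((MvPolynomial.aeval (R := ℂ) (HAd N))
        ((MvPolynomial.map (algebraMap ℚ ℂ)) (MvPolynomial.X i))) = ee N i i
  rw [MvPolynomial.map_X, MvPolynomial.aeval_X]
  rfl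

lemma Psi_eval {N : ℕ} (q : MvPolynomial (Fin N) ℚ) :
    Psi N q = ∑ d ∈ q.support,
      algebraMap ℚ ℂ (q.coeff d) • (List.ofFn fun i : Fin N => ee N i i ^ d i).prod := by
  show (AdjD N).val
      ((MvPolynomial.aeval (R := ℂ) (HAd N)) ((MvPolynomial.map (algebraMap ℚ ℂ)) q)) = _
  rw [MvPolynomial.aeval_def, MvPolynomial.eval₂_map, MvPolynomial.eval₂_eq']
  rw [map_sum]
  refine Finset.sum_congr rfl fun d _ => ?_
  rw [map_mul]
  have h1 : (AdjD N).val (((algebraMap ℂ (AdjD N)).comp (algebraMap ℚ ℂ)) (q.coeff d))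
      = algebraMap ℚ ℂ (q.coeff d) • (1 : UniversalEnvelopingAlgebra ℂ (gl N)) := by
    simp [Algebra.smul_def]
  have h2 : (AdjD N).val (∏ i, HAd N i ^ d i)
      = (List.ofFn fun i : Fin N => ee N i i ^ d i).prod := by
    rw [← List.prod_ofFn]
    erw [map_list_prod, List.map_ofFn]
    congr 1
  erw [h1, h2]
  rw [smul_mul_assoc, one_mul]

lemma evalDiag_eq_Psi {N : ℕ} (q : MvPolynomial (Fin N) ℚ) :
    evalDiag N q = Psi N q := (Psi_eval q).symm

/-- polynomial version of `DD` -/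
noncomputable def DAp (N : ℕ) (i j k : Fin N) : MvPolynomial (Fin N) ℚ :=
  (if i = j ∧ j = k then MvPolynomial.X i ^ 3 else 0)
  + (if i < j ∧ j = k then (MvPolynomial.X i - MvPolynomial.X j) * (MvPolynomial.X j + 1) else 0)
  + (if i < j ∧ i = k then (MvPolynomial.X i - MvPolynomial.X j) * MvPolynomial.X i else 0)
  + (if i = j ∧ i < k then MvPolynomial.X i * (MvPolynomial.X i - MvPolynomial.X k) else 0)
  + (if i < j ∧ j < k then MvPolynomial.X i - MvPolynomial.X j else 0)
  + (if i < k ∧ k < j then MvPolynomial.X i - MvPolynomial.X k else 0)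

lemma Psi_DAp {N : ℕ} (i j k : Fin N) : Psi N (DAp N i j k) = DD N i j k := by
  simp only [DAp, DD, map_add, apply_ite (Psi N), map_mul, map_sub, map_pow, map_one,
    map_zero, Psi_X]

lemma sum_DAp {N : ℕ} (hN : 1 ≤ N) :
    (∑ i, ∑ j, ∑ k, DAp N i j k) = qPoly N := by
  apply MvPolynomial.funext
  intro x
  have hL : MvPolynomial.eval x (∑ i, ∑ j, ∑ k, DAp N i j k)
      = ∑ i, ∑ j, ∑ k,
        ((if i = j ∧ j = k then x i ^ 3 else 0)
          + (if i < j ∧ j = k then (x i - x j) * (x j + 1) else 0)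
          + (if i < j ∧ i = k then (x i - x j) * x i else 0)
          + (if i = j ∧ i < k then x i * (x i - x k) else 0)
          + (if i < j ∧ j < k then x i - x j else 0)
          + (if i < k ∧ k < j then x i - x k else 0)) := by
    simp only [map_sum]
    refine Finset.sum_congr rfl fun i _ => Finset.sum_congr rfl fun j _ =>
      Finset.sum_congr rfl fun k _ => ?_
    simp only [DAp, map_add, apply_ite (MvPolynomial.eval x), map_mul, map_sub, map_pow,
      map_one, map_zero, MvPolynomial.eval_X]
  have hR : MvPolynomial.eval x (qPoly N)
      = (-(1/4) * (N:ℚ)^2) * (∑ i : Fin N,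
            ((x i + (((N:ℚ)+1)/2 - ((i:ℕ)+1)))^1 - (((N:ℚ)+1)/2 - ((i:ℕ)+1))^1))
        + ((N:ℚ)/2) * (∑ i : Fin N,
            ((x i + (((N:ℚ)+1)/2 - ((i:ℕ)+1)))^2 - (((N:ℚ)+1)/2 - ((i:ℕ)+1))^2))
        + (1/4) * (∑ i : Fin N,
            ((x i + (((N:ℚ)+1)/2 - ((i:ℕ)+1)))^1 - (((N:ℚ)+1)/2 - ((i:ℕ)+1))^1))
        + (∑ i : Fin N,
            ((x i + (((N:ℚ)+1)/2 - ((i:ℕ)+1)))^3 - (((N:ℚ)+1)/2 - ((i:ℕ)+1))^3))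
        - (1/2) * (∑ i : Fin N,
            ((x i + (((N:ℚ)+1)/2 - ((i:ℕ)+1)))^1 - (((N:ℚ)+1)/2 - ((i:ℕ)+1))^1))^2 := by
    simp only [qPoly, shiftedPow, map_add, map_sub, map_mul, map_pow, map_sum,
      MvPolynomial.eval_C, MvPolynomial.eval_X]
  rw [hL, hR]
  exact keyQ hN x

noncomputable def tripleEquiv (N : ℕ) : (Fin N × Fin N × Fin N) ≃ (Fin 3 → Fin N) where
  toFun p := ![p.1, p.2.1, p.2.2]
  invFun f := (f 0, f 1, f 2)
  left_inv p := rfl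
  right_inv f := by
    funext t
    fin_cases t <;> rfl

lemma casimir3 {N : ℕ} :
    casimir N 3
      = ∑ f : Fin 3 → Fin N, ee N (f 0) (f 1) * (ee N (f 1) (f 2) * ee N (f 2) (f 0)) := by
  rw [casimir, wgl]
  refine Finset.sum_congr rfl fun f _ => ?_
  show (List.ofFn fun t : Fin 3 => ιgl N (E (f t) (f (finRotate 3 t)))).prod = _
  have h0 : finRotate 3 0 = 1 := rfl
  have h1 : finRotate 3 1 = 2 := rfl
  have h2 : finRotate 3 2 = 0 := rfl
  simp only [List.ofFn_succ, List.ofFn_zero, List.prod_cons, List.prod_nil, h0, h1, h2,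
    mul_one, ee]
  rfl

lemma main1 {N : ℕ} :
    casimir N 3 - (∑ f : Fin 3 → Fin N, DD N (f 0) (f 1) (f 2)) ∈ triangIdeal N := by
  rw [casimir3, ← Finset.sum_sub_distrib]
  exact Submodule.sum_mem _ fun f _ => word_mem (f 0) (f 1) (f 2)

lemma main2 {N : ℕ} (hN : 1 ≤ N) :
    (∑ f : Fin 3 → Fin N, DD N (f 0) (f 1) (f 2)) = evalDiag N (qPoly N) := by
  have e1 : (∑ f : Fin 3 → Fin N, DD N (f 0) (f 1) (f 2))
      = ∑ p : Fin N × Fin N × Fin N, DD N p.1 p.2.1 p.2.2 := by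
    rw [← Equiv.sum_comp (tripleEquiv N) (fun f => DD N (f 0) (f 1) (f 2))]
    rfl
  have e2 : (∑ p : Fin N × Fin N × Fin N, DD N p.1 p.2.1 p.2.2)
      = ∑ i, ∑ j, ∑ k, DD N i j k := by
    rw [Fintype.sum_prod_type]
    refine Finset.sum_congr rfl fun i _ => ?_
    rw [Fintype.sum_prod_type]
  rw [e1, e2, evalDiag_eq_Psi, ← sum_DAp hN, map_sum]
  refine Finset.sum_congr rfl fun i _ => ?_
  rw [map_sum]
  refine Finset.sum_congr rfl fun j _ => ?_
  rw [map_sum]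
  exact Finset.sum_congr rfl fun k _ => (Psi_DAp i j k).symm

/-- Harish–Chandra projection of `C_3`: with
`q = −(1/4)·N²·p_1 + (N/2)·p_2 + (1/4)·p_1 + p_3 − (1/2)·p_1²`,
the element `C_3 − q(ι(E_{11}),…,ι(E_{NN}))` lies in `I = n_− U(gl_N) + U(gl_N) n_+`;
that is, the Harish–Chandra projection of `C_3` equals `q` evaluated at the diagonal
matrix units. -/
theorem harishChandra_C3 (N : ℕ) (hN : 1 ≤ N) :
    let p := shiftedPow N
    let q : MvPolynomial (Fin N) ℚ :=
      MvPolynomial.C (-(1 / 4 : ℚ) * (N : ℚ) ^ 2) * p 1 +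
        MvPolynomial.C ((N : ℚ) / 2) * p 2 +
        MvPolynomial.C (1 / 4 : ℚ) * p 1 + p 3 -
        MvPolynomial.C (1 / 2 : ℚ) * (p 1) ^ 2
    casimir N 3 - evalDiag N q ∈ triangIdeal N := by
  intro p q
  show casimir N 3 - evalDiag N (qPoly N) ∈ triangIdeal N
  rw [← main2 hN]
  exact main1
end

section
/- (Centrality of the Lie algebra weight system.) Let g be a finite-dimensional complex Lie algebra with a nondegenerate symmetric invariant bilinear form B, let e = (e_1,…,e_d) be a basis of g with B-dual basis e*, let n ≥ 1, and let σ be a fixed-point-free involution of {1,…,2n}. Then w_{g,e}(σ) belongs to the center of U(g); equivalently, ι(y)·w_{g,e}(σ) = w_{g,e}(σ)·ι(y) for every y ∈ g. -/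
open scoped BigOperators

open UniversalEnvelopingAlgebra
open scoped BigOperators
open UniversalEnvelopingAlgebra

section Aux
attribute [local instance] LieRing.ofAssociativeRing
variable {g : Type*} [LieRing g] [LieAlgebra ℂ g]

noncomputable def Wfn {m : ℕ} (v : Fin m → g) : UniversalEnvelopingAlgebra ℂ g :=
  (List.ofFn fun t => UniversalEnvelopingAlgebra.ι ℂ (v t)).prod

lemma Wfn_zero (v : Fin 0 → g) : Wfn v = 1 := by simp [Wfn]

lemma Wfn_succ {m : ℕ} (v : Fin (m+1) → g) :
    Wfn v = ι ℂ (v 0) * Wfn (v ∘ Fin.succ) := by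
  simp [Wfn, List.ofFn_succ]

lemma ι_swap (y a : g) : ι ℂ y * ι ℂ a = ι ℂ a * ι ℂ y + ι ℂ ⁅y, a⁆ := by
  have := (ι ℂ (L := g)).map_lie y a
  rw [Ring.lie_def] at this
  rw [this]; noncomm_ring

lemma update_zero_comp_succ {m : ℕ} (v : Fin (m+1) → g) (z : g) :
    Function.update v 0 z ∘ Fin.succ = v ∘ Fin.succ := by
  funext s
  simp [Function.update_of_ne (Fin.succ_ne_zero s)]

lemma update_succ_comp_succ {m : ℕ} (v : Fin (m+1) → g) (t : Fin m) (z : g) :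
    Function.update v t.succ z ∘ Fin.succ = Function.update (v ∘ Fin.succ) t z :=
  Function.update_comp_eq_of_injective v (Fin.succ_injective m) t z

lemma Wfn_comm (y : g) : ∀ {m : ℕ} (v : Fin m → g),
    ι ℂ y * Wfn v = Wfn v * ι ℂ y + ∑ t, Wfn (Function.update v t ⁅y, v t⁆) := by
  intro m
  induction m with
  | zero => intro v; simp [Wfn_zero]
  | succ m ih =>
    intro v
    rw [Wfn_succ, ← mul_assoc, ι_swap, add_mul, mul_assoc, ih (v ∘ Fin.succ),
      Fin.sum_univ_succ]
    have h0 : Wfn (Function.update v 0 ⁅y, v 0⁆) = ι ℂ ⁅y, v 0⁆ * Wfn (v ∘ Fin.succ) := by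
      rw [Wfn_succ, update_zero_comp_succ]; simp
    have hs : ∀ t : Fin m, Wfn (Function.update v t.succ ⁅y, v t.succ⁆)
        = ι ℂ (v 0) * Wfn (Function.update (v ∘ Fin.succ) t ⁅y, (v ∘ Fin.succ) t⁆) := by
      intro t
      rw [Wfn_succ, update_succ_comp_succ]
      simp [Function.update_of_ne (Fin.succ_ne_zero t)]
      rfl
    rw [h0]
    simp only [hs]
    rw [mul_add, Finset.mul_sum, ← mul_assoc]
    abel

lemma Wfn_update_zero {m : ℕ} (v : Fin (m+1) → g) (z : g) :
    Wfn (Function.update v 0 z) = ι ℂ z * Wfn (v ∘ Fin.succ) := by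
  rw [Wfn_succ, update_zero_comp_succ]; simp

lemma Wfn_update_succ {m : ℕ} (v : Fin (m+1) → g) (t : Fin m) (z : g) :
    Wfn (Function.update v t.succ z)
      = ι ℂ (v 0) * Wfn (Function.update (v ∘ Fin.succ) t z) := by
  rw [Wfn_succ, update_succ_comp_succ,
    Function.update_of_ne (Fin.succ_ne_zero t).symm]

lemma ι_sum {κ : Type*} (s : Finset κ) (f : κ → g) :
    ι ℂ (∑ k ∈ s, f k) = ∑ k ∈ s, ι ℂ (f k) := by
  rw [← LieHom.coe_toLinearMap, map_sum]

lemma Wfn_update_sum {κ : Type*} (s : Finset κ) :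
    ∀ {m : ℕ} (v : Fin m → g) (t : Fin m) (c : κ → ℂ) (u : κ → g),
    Wfn (Function.update v t (∑ k ∈ s, c k • u k))
      = ∑ k ∈ s, c k • Wfn (Function.update v t (u k)) := by
  intro m
  induction m with
  | zero => intro v t; exact t.elim0
  | succ m ih =>
    intro v t c u
    induction t using Fin.cases with
    | zero =>
      rw [Wfn_update_zero, ι_sum, Finset.sum_mul]
      simp only [Wfn_update_zero, map_smul, smul_mul_assoc]
    | succ t =>
      simp only [Wfn_update_succ, ih, Finset.mul_sum, mul_smul_comm]

/-- The assignment of Lie algebra elements to positions determined by an index function. -/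
noncomputable def Vfun {d m : ℕ} (e estar : Fin d → g) (σ : Equiv.Perm (Fin m))
    (i : Fin m → Fin d) : Fin m → g :=
  fun t => if (t : ℕ) < ((σ t : Fin m) : ℕ) then e (i t) else estar (i t)

/-- The basis element inserted at position `t` with index `k`. -/
noncomputable def Efun {d m : ℕ} (e estar : Fin d → g) (σ : Equiv.Perm (Fin m))
    (t : Fin m) (k : Fin d) : g :=
  if (t : ℕ) < ((σ t : Fin m) : ℕ) then e k else estar k

/-- The structure-constant coefficient appearing when commuting `ι y` through. -/
noncomputable def Ccoef {d m : ℕ} (B : g →ₗ[ℂ] g →ₗ[ℂ] ℂ) (e estar : Fin d → g)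
    (σ : Equiv.Perm (Fin m)) (y : g) (i : Fin m → Fin d) (t : Fin m) (k : Fin d) : ℂ :=
  if (t : ℕ) < ((σ t : Fin m) : ℕ) then B ⁅y, e (i t)⁆ (estar k)
  else B (e k) ⁅y, estar (i t)⁆

variable {g : Type*} [LieRing g] [LieAlgebra ℂ g]

lemma expand_e_lemma {d : ℕ} (B : g →ₗ[ℂ] g →ₗ[ℂ] ℂ) (e : Module.Basis (Fin d) ℂ g)
    (estar : Fin d → g) (he : ∀ i j, B (e i) (estar j) = if i = j then 1 else 0)
    (z : g) : z = ∑ k, B z (estar k) • e k := by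
  have hBz : ∀ k, B z (estar k) = e.repr z k := by
    intro k
    conv_lhs => rw [← e.sum_repr z]
    simp [map_sum, he, Finset.sum_ite_eq', -Module.Basis.sum_repr]
  simp only [hBz]
  exact (e.sum_repr z).symm

lemma expand_star_lemma {d : ℕ} (B : g →ₗ[ℂ] g →ₗ[ℂ] ℂ)
    (hsymm : ∀ x y, B x y = B y x)
    (hnondeg : ∀ x, (∀ y, B x y = 0) → x = 0)
    (e : Module.Basis (Fin d) ℂ g) (estar : Fin d → g)
    (he : ∀ i j, B (e i) (estar j) = if i = j then 1 else 0)
    (z : g) : z = ∑ k, B (e k) z • estar k := by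
  set z' := ∑ k, B (e k) z • estar k with hz'
  have hj : ∀ j, B (e j) (z - z') = 0 := by
    intro j
    rw [map_sub, hz']
    simp [map_sum, he, Finset.sum_ite_eq]
  have h0 : z - z' = 0 := by
    refine hnondeg _ fun w => ?_
    rw [hsymm]
    conv_lhs => rw [← e.sum_repr w]
    simp [map_sum, hj, -Module.Basis.sum_repr]
  have := sub_eq_zero.mp h0
  exact this

end Aux

set_option maxHeartbeats 2000000

/-- The value of the weight system of a Lie algebra `g` on a (fixed-point-free) involution
`σ` of `{1,…,m}`, with respect to a basis `e` and a dual basis `estar`: the sum, over all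
assignments of an index in `{1,…,d}` to each orbit of `σ` (equivalently, over all
`σ`-invariant functions `i : {1,…,m} → {1,…,d}`), of the ordered product
`x_1 ⋯ x_m ∈ U(g)`, where `x_t = ι(e_{i(t)})` if `t` is the smaller element of its orbit
(`t < σ(t)`) and `x_t = ι(e*_{i(t)})` if `t` is the larger one. -/
noncomputable def wLie {g : Type*} [LieRing g] [LieAlgebra ℂ g] {d m : ℕ}
    (e estar : Fin d → g) (σ : Equiv.Perm (Fin m)) : UniversalEnvelopingAlgebra ℂ g :=
  ∑ i ∈ Finset.univ.filter (fun i : Fin m → Fin d => ∀ t, i (σ t) = i t),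
    (List.ofFn fun t : Fin m =>
      if (t : ℕ) < ((σ t : Fin m) : ℕ) then UniversalEnvelopingAlgebra.ι ℂ (e (i t))
      else UniversalEnvelopingAlgebra.ι ℂ (estar (i t))).prod

/-- Centrality of the Lie algebra weight system: for a finite-dimensional complex Lie
algebra `g` with a nondegenerate symmetric invariant bilinear form `B`, a basis `e` with
`B`-dual basis `e*`, and a fixed-point-free involution `σ` of `{1,…,2n}`, the element
`w_{g,e}(σ)` lies in the center of `U(g)`: it commutes with `ι(y)` for every `y ∈ g`. -/
theorem wLie_central {g : Type*} [LieRing g] [LieAlgebra ℂ g]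
    (B : g →ₗ[ℂ] g →ₗ[ℂ] ℂ)
    (hsymm : ∀ x y, B x y = B y x)
    (hinv : ∀ x y z, B ⁅x, y⁆ z = B x ⁅y, z⁆)
    (hnondeg : ∀ x, (∀ y, B x y = 0) → x = 0)
    (d : ℕ) (e : Module.Basis (Fin d) ℂ g) (estar : Fin d → g)
    (he : ∀ i j, B (e i) (estar j) = if i = j then 1 else 0)
    (n : ℕ) (hn : 1 ≤ n) (σ : Equiv.Perm (Fin (n + n)))
    (hinvol : ∀ t, σ (σ t) = t) (hfree : ∀ t, σ t ≠ t)
    (y : g) :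
    UniversalEnvelopingAlgebra.ι ℂ y * wLie (⇑e) estar σ =
      wLie (⇑e) estar σ * UniversalEnvelopingAlgebra.ι ℂ y := by
  classical
  set S : Finset (Fin (n + n) → Fin d) :=
    Finset.univ.filter (fun i : Fin (n + n) → Fin d => ∀ t, i (σ t) = i t) with hS
  set V : (Fin (n + n) → Fin d) → Fin (n + n) → g := Vfun (⇑e) estar σ with hV
  set E : Fin (n + n) → Fin d → g := Efun (⇑e) estar σ with hE
  set C : (Fin (n + n) → Fin d) → Fin (n + n) → Fin d → ℂ := Ccoef B (⇑e) estar σ y with hC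
  -- skew-symmetry of the structure coefficients
  have hskew : ∀ j k : Fin d, B (e j) ⁅y, estar k⁆ = - B ⁅y, e j⁆ (estar k) := by
    intro j k
    rw [← hinv]
    have hl : (⁅e j, y⁆ : g) = -⁅y, e j⁆ := (lie_skew (e j) y).symm
    rw [hl, map_neg, LinearMap.neg_apply]
  -- rewrite wLie as a sum of Wfn's
  have hw : wLie (⇑e) estar σ = ∑ i ∈ S, Wfn (V i) := by
    refine Finset.sum_congr rfl fun i _ => ?_
    simp only [Wfn, hV, Vfun, apply_ite (ι ℂ)]
  -- expansion of each commutator term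
  have key : ∀ (i : Fin (n + n) → Fin d) (t : Fin (n + n)),
      Wfn (Function.update (V i) t ⁅y, V i t⁆)
        = ∑ k, C i t k • Wfn (Function.update (V i) t (E t k)) := by
    intro i t
    by_cases h : (t : ℕ) < ((σ t : Fin (n + n)) : ℕ)
    · have h1 : V i t = e (i t) := if_pos h
      rw [h1]
      conv_lhs => rw [expand_e_lemma B e estar he ⁅y, e (i t)⁆, Wfn_update_sum]
      refine Finset.sum_congr rfl fun k _ => ?_
      simp only [hC, Ccoef, hE, Efun, if_pos h]
    · have h1 : V i t = estar (i t) := if_neg h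
      rw [h1]
      conv_lhs => rw [expand_star_lemma B hsymm hnondeg e estar he ⁅y, estar (i t)⁆,
        Wfn_update_sum]
      refine Finset.sum_congr rfl fun k _ => ?_
      simp only [hC, Ccoef, hE, Efun, if_neg h]
  rw [← sub_eq_zero, hw, Finset.mul_sum, Finset.sum_mul, ← Finset.sum_sub_distrib]
  have hstep : ∀ i ∈ S, ι ℂ y * Wfn (V i) - Wfn (V i) * ι ℂ y
      = ∑ t, ∑ k, C i t k • Wfn (Function.update (V i) t (E t k)) := by
    intro i _
    rw [Wfn_comm y (V i), add_sub_cancel_left]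
    exact Finset.sum_congr rfl fun t _ => key i t
  rw [Finset.sum_congr rfl hstep]
  -- convert to a sum over a product finset and kill it with an involution
  have hprod : (∑ i ∈ S, ∑ t : Fin (n + n), ∑ k : Fin d,
        C i t k • Wfn (Function.update (V i) t (E t k)))
      = ∑ p ∈ S ×ˢ ((Finset.univ : Finset (Fin (n + n))) ×ˢ (Finset.univ : Finset (Fin d))),
        C p.1 p.2.1 p.2.2 • Wfn (Function.update (V p.1) p.2.1 (E p.2.1 p.2.2)) := by
    simp only [Finset.sum_product]
  rw [hprod]
  -- the involution
  set G : (Fin (n + n) → Fin d) × Fin (n + n) × Fin d → (Fin (n + n) → Fin d) × Fin (n + n) × Fin d :=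
    fun p => (fun s => if s = p.2.1 ∨ s = σ p.2.1 then p.2.2 else p.1 s,
      σ p.2.1, p.1 p.2.1) with hG
  refine Finset.sum_involution (fun p _ => G p) ?_ ?_ ?_ ?_
  · -- cancellation
    rintro ⟨i, t, k⟩ hp
    have hi : ∀ s, i (σ s) = i s := by
      simp only [hS, Finset.mem_product, Finset.mem_filter, Finset.mem_univ, true_and,
        and_true] at hp
      exact hp
    have htσ : t ≠ σ t := fun hh => hfree t hh.symm
    have hvne : ((σ t : Fin (n + n)) : ℕ) ≠ (t : ℕ) := fun hh => hfree t (Fin.val_injective hh)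
    by_cases h : (t : ℕ) < ((σ t : Fin (n + n)) : ℕ)
    · have hσc : ¬ ((σ t : Fin (n + n)) : ℕ) < ((σ (σ t) : Fin (n + n)) : ℕ) := by
        rw [hinvol]; omega
      have hcoef : C (fun s => if s = t ∨ s = σ t then k else i s) (σ t) (i t) = - C i t k := by
        simp only [hC, Ccoef, if_neg hσc, if_pos h]
        simpa using hskew (i t) k
      have hmono : Function.update (V (fun s => if s = t ∨ s = σ t then k else i s)) (σ t)
            (E (σ t) (i t)) = Function.update (V i) t (E t k) := by
        funext s
        by_cases h1 : s = t
        · subst h1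
          rw [Function.update_of_ne htσ, Function.update_self]
          simp [hV, Vfun, hE, Efun, if_pos h]
        · by_cases h2 : s = σ t
          · subst h2
            rw [Function.update_self, Function.update_of_ne (fun hh => htσ hh.symm)]
            simp [hV, Vfun, hE, Efun, if_neg hσc, hi t]
          · rw [Function.update_of_ne h2, Function.update_of_ne h1]
            simp [hV, Vfun, h1, h2]
      simp only [hG]
      rw [hcoef, hmono, neg_smul]
      first
      | exact add_neg_cancel _
      | exact add_right_neg _
    · have h' : ((σ t : Fin (n + n)) : ℕ) < (t : ℕ) := by omega
      have hσc : ((σ t : Fin (n + n)) : ℕ) < ((σ (σ t) : Fin (n + n)) : ℕ) := by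
        rw [hinvol]; omega
      have hcoef : C (fun s => if s = t ∨ s = σ t then k else i s) (σ t) (i t) = - C i t k := by
        simp only [hC, Ccoef, if_pos hσc, if_neg h]
        rw [hskew k (i t)]
        simp
      have hmono : Function.update (V (fun s => if s = t ∨ s = σ t then k else i s)) (σ t)
            (E (σ t) (i t)) = Function.update (V i) t (E t k) := by
        funext s
        by_cases h1 : s = t
        · subst h1
          rw [Function.update_of_ne htσ, Function.update_self]
          simp [hV, Vfun, hE, Efun, if_neg h]
        · by_cases h2 : s = σ t
          · subst h2
            rw [Function.update_self, Function.update_of_ne (fun hh => htσ hh.symm)]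
            simp [hV, Vfun, hE, Efun, if_pos hσc, hi t]
          · rw [Function.update_of_ne h2, Function.update_of_ne h1]
            simp [hV, Vfun, h1, h2]
      simp only [hG]
      rw [hcoef, hmono, neg_smul]
      first
      | exact add_neg_cancel _
      | exact add_right_neg _
  · rintro ⟨i, t, k⟩ hp _ hEq
    exact hfree t (congrArg (fun q => q.2.1) hEq)
  · -- membership
    rintro ⟨i, t, k⟩ hp
    simp only [hS, Finset.mem_product, Finset.mem_filter, Finset.mem_univ, true_and,
      and_true, hG] at hp ⊢
    intro s
    by_cases h1 : s = t
    · subst h1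
      simp [hfree s, (Equiv.injective σ).ne_iff.mpr (hfree s)]
    · by_cases h2 : s = σ t
      · subst h2
        simp [hinvol]
      · have h3 : σ s ≠ t := fun h => h2 (by rw [← h, hinvol])
        have h4 : σ s ≠ σ t := (Equiv.injective σ).ne_iff.mpr h1
        simp only [if_neg (by tauto : ¬(σ s = t ∨ σ s = σ t)),
          if_neg (by tauto : ¬(s = t ∨ s = σ t))]
        exact hp s
  · -- involutivity
    rintro ⟨i, t, k⟩ hp
    have hi : ∀ s, i (σ s) = i s := by
      simp only [hS, Finset.mem_product, Finset.mem_filter, Finset.mem_univ, true_and,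
        and_true] at hp
      exact hp
    simp only [hG, hinvol]
    refine Prod.ext ?_ (Prod.ext rfl ?_)
    · funext s
      by_cases h1 : s = σ t
      · subst h1
        have : i (σ t) = i t := hi t
        simp [hinvol, this]
      · by_cases h2 : s = t
        · subst h2
          simp [hinvol]
        · simp [h1, h2]
    · simp
end
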